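/- arXiv:1902.07828 — 2 statements merged into one kernel-verified Lean document; each statement's English description precedes it below -/
import Mathlib

section
/- Every singular value of the matrix Q = D_X^{-1/2}(P - p_X p_Y^T) D_Y^{-1/2} is at most 1. -/
open Matrix

/-- Every singular value of
`Q = D_X^{-1/2} (P - pX pYᵀ) D_Y^{-1/2}` is at most `1`.  Singular values of
`Q` are the square roots of the eigenvalues of `Qᵀ Q` (over `ℝ`, `Qᴴ = Qᵀ`). -/
theorem singular_values_le_one
    {𝒳 𝒴 : Type*} [Fintype 𝒳] [Fintype 𝒴] [DecidableEq 𝒳] [DecidableEq 𝒴]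
    (P : Matrix 𝒳 𝒴 ℝ)
    (hP_nonneg : ∀ x y, 0 ≤ P x y)
    (hP_sum : ∑ x : 𝒳, ∑ y : 𝒴, P x y = 1)
    (pX : 𝒳 → ℝ) (pY : 𝒴 → ℝ)
    (hpX : pX = Matrix.mulVec P (fun _ => 1))
    (hpY : pY = Matrix.mulVec Pᵀ (fun _ => 1))
    (hpXpos : ∀ x, 0 < pX x) (hpYpos : ∀ y, 0 < pY y)
    (Q : Matrix 𝒳 𝒴 ℝ)
    (hQ : Q = Matrix.diagonal (fun x => (Real.sqrt (pX x))⁻¹)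
              * (P - Matrix.vecMulVec pX pY)
              * Matrix.diagonal (fun y => (Real.sqrt (pY y))⁻¹)) :
    ∀ i : 𝒴,
      Real.sqrt ((Matrix.isHermitian_conjTranspose_mul_self Q).eigenvalues i) ≤ 1 := by
  intro i
  set s : 𝒴 → ℝ := fun y => Real.sqrt (pY y) with hs
  have hrowsum : ∀ x, ∑ y, P x y = pX x := by
    intro x; rw [hpX]; simp [mulVec, dotProduct]
  have hcolsum : ∀ y, ∑ x, P x y = pY y := by
    intro y; rw [hpY]; simp [mulVec, dotProduct, Matrix.transpose_apply]
  have hsy : ∀ y, s y * s y = pY y := fun y => Real.mul_self_sqrt (hpYpos y).le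
  have hsy_pos : ∀ y, 0 < s y := fun y => Real.sqrt_pos.2 (hpYpos y)
  have hsx_pos : ∀ x, 0 < Real.sqrt (pX x) := fun x => Real.sqrt_pos.2 (hpXpos x)
  have hsumpY : ∑ y, pY y = 1 := by
    rw [← hP_sum, show (∑ x, ∑ y, P x y) = ∑ y, ∑ x, P x y from Finset.sum_comm]
    exact Finset.sum_congr rfl fun y _ => (hcolsum y).symm
  -- key contraction property
  have hsne : ∀ y, s y ≠ 0 := fun y => (hsy_pos y).ne'
  have key : ∀ v : 𝒴 → ℝ, ∑ x, ((Q *ᵥ v) x) ^ 2 ≤ ∑ y, (v y) ^ 2 := by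
    intro v
    set c : ℝ := ∑ y, s y * v y with hc
    set u : 𝒴 → ℝ := fun y => v y - c * s y with hu
    have hQapp : ∀ x y, Q x y
        = (Real.sqrt (pX x))⁻¹ * (P x y - pX x * pY y) * (s y)⁻¹ := by
      intro x y
      simp [hQ, Matrix.mul_diagonal, Matrix.diagonal_mul, Matrix.sub_apply,
        Matrix.vecMulVec_apply, hs]
    have hQv : ∀ x, (Q *ᵥ v) x
        = (Real.sqrt (pX x))⁻¹ * ∑ y, P x y * ((s y)⁻¹ * u y) := by
      intro x
      have e1 : ∀ y, Q x y * v y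
          = (Real.sqrt (pX x))⁻¹ * (P x y * ((s y)⁻¹ * v y))
            - (Real.sqrt (pX x))⁻¹ * pX x * (s y * v y) := by
        intro y
        have h2 : (P x y - pX x * pY y) * (s y)⁻¹ = P x y * (s y)⁻¹ - pX x * s y := by
          rw [sub_mul, mul_assoc]
          congr 1
          rw [← hsy y, mul_assoc, mul_inv_cancel₀ (hsne y), mul_one]
        rw [hQapp x y, show (Real.sqrt (pX x))⁻¹ * (P x y - pX x * pY y) * (s y)⁻¹
          = (Real.sqrt (pX x))⁻¹ * (P x y * (s y)⁻¹ - pX x * s y) from by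
            rw [mul_assoc, h2]]
        ring
      have e2 : ∀ y, P x y * ((s y)⁻¹ * u y)
          = P x y * ((s y)⁻¹ * v y) - c * P x y := by
        intro y
        simp only [hu]
        have h3 := hsne y
        field_simp
      calc (Q *ᵥ v) x = ∑ y, Q x y * v y := by simp [Matrix.mulVec, dotProduct]
        _ = ∑ y, ((Real.sqrt (pX x))⁻¹ * (P x y * ((s y)⁻¹ * v y))
              - (Real.sqrt (pX x))⁻¹ * pX x * (s y * v y)) :=
            Finset.sum_congr rfl fun y _ => e1 y
        _ = (Real.sqrt (pX x))⁻¹ * (∑ y, P x y * ((s y)⁻¹ * v y))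
              - (Real.sqrt (pX x))⁻¹ * pX x * c := by
            rw [Finset.sum_sub_distrib, ← Finset.mul_sum, ← Finset.mul_sum, hc]
        _ = (Real.sqrt (pX x))⁻¹ * ∑ y, P x y * ((s y)⁻¹ * u y) := by
            rw [Finset.sum_congr rfl fun y _ => e2 y, Finset.sum_sub_distrib,
              ← Finset.mul_sum, hrowsum x]
            ring
    -- Cauchy–Schwarz bound per row
    have bound : ∀ x, ((Q *ᵥ v) x) ^ 2 ≤ ∑ y, P x y * ((s y)⁻¹ * u y) ^ 2 := by
      intro x
      rw [hQv x]
      have cs := Finset.sum_mul_sq_le_sq_mul_sq Finset.univ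
        (fun y => Real.sqrt (P x y)) (fun y => Real.sqrt (P x y) * ((s y)⁻¹ * u y))
      have h4 : ∀ y, Real.sqrt (P x y) * (Real.sqrt (P x y) * ((s y)⁻¹ * u y))
          = P x y * ((s y)⁻¹ * u y) := by
        intro y
        rw [← mul_assoc, Real.mul_self_sqrt (hP_nonneg x y)]
      have h5 : ∀ y, (Real.sqrt (P x y)) ^ 2 = P x y := fun y =>
        Real.sq_sqrt (hP_nonneg x y)
      have h6 : ∀ y, (Real.sqrt (P x y) * ((s y)⁻¹ * u y)) ^ 2
          = P x y * ((s y)⁻¹ * u y) ^ 2 := by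
        intro y; rw [mul_pow, h5 y]
      rw [Finset.sum_congr rfl fun y _ => h4 y,
        Finset.sum_congr rfl fun y _ => h5 y,
        Finset.sum_congr rfl fun y _ => h6 y, hrowsum x] at cs
      calc ((Real.sqrt (pX x))⁻¹ * ∑ y, P x y * ((s y)⁻¹ * u y)) ^ 2
          = (pX x)⁻¹ * (∑ y, P x y * ((s y)⁻¹ * u y)) ^ 2 := by
            rw [mul_pow, ← Real.sqrt_inv, Real.sq_sqrt (inv_nonneg.2 (hpXpos x).le)]
        _ ≤ (pX x)⁻¹ * (pX x * ∑ y, P x y * ((s y)⁻¹ * u y) ^ 2) := by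
            apply mul_le_mul_of_nonneg_left cs (inv_nonneg.2 (hpXpos x).le)
        _ = ∑ y, P x y * ((s y)⁻¹ * u y) ^ 2 := by
            rw [← mul_assoc, inv_mul_cancel₀ (hpXpos x).ne', one_mul]
    have husum : ∑ y, (u y) ^ 2 ≤ ∑ y, (v y) ^ 2 := by
      have : ∑ y, (u y) ^ 2 = ∑ y, (v y) ^ 2 - c ^ 2 := by
        have eterm : ∀ y, (u y) ^ 2
            = (v y) ^ 2 - 2 * c * (s y * v y) + c ^ 2 * pY y := by
          intro y
          simp only [hu]
          rw [← hsy y]; ring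
        rw [Finset.sum_congr rfl fun y _ => eterm y]
        rw [Finset.sum_add_distrib, Finset.sum_sub_distrib, ← Finset.mul_sum,
          ← Finset.mul_sum, hsumpY, ← hc]
        ring
      rw [this]
      nlinarith [sq_nonneg c]
    calc ∑ x, ((Q *ᵥ v) x) ^ 2 ≤ ∑ x, ∑ y, P x y * ((s y)⁻¹ * u y) ^ 2 :=
          Finset.sum_le_sum fun x _ => bound x
      _ = ∑ y, pY y * ((s y)⁻¹ * u y) ^ 2 := by
          rw [Finset.sum_comm]
          refine Finset.sum_congr rfl fun y _ => ?_
          rw [← Finset.sum_mul, hcolsum y]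
      _ = ∑ y, (u y) ^ 2 := by
          refine Finset.sum_congr rfl fun y _ => ?_
          have hne := hsne y
          rw [mul_pow, ← mul_assoc, ← hsy y]
          field_simp
      _ ≤ ∑ y, (v y) ^ 2 := husum
  -- eigenvalue part
  set hH := Matrix.isHermitian_conjTranspose_mul_self Q with hHdef
  set μ := hH.eigenvalues i with hμ
  set v : 𝒴 → ℝ := ⇑(hH.eigenvectorBasis i) with hv
  have hev : (Qᵀ * Q) *ᵥ v = μ • v := hH.mulVec_eigenvectorBasis i
  have hvne : v ≠ 0 := by
    have := hH.eigenvectorBasis.orthonormal.ne_zero i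
    intro h
    apply this
    ext y
    exact congrFun h y
  have hvsum : 0 < ∑ y, (v y) ^ 2 := by
    rcases Function.ne_iff.1 hvne with ⟨y0, hy0⟩
    have hy0' : v y0 ≠ 0 := by simpa using hy0
    have : (0:ℝ) < (v y0) ^ 2 := by positivity
    exact lt_of_lt_of_le this (Finset.single_le_sum (fun y _ => sq_nonneg (v y))
      (Finset.mem_univ y0))
  have hdot : μ * ∑ y, (v y) ^ 2 = ∑ x, ((Q *ᵥ v) x) ^ 2 := by
    have h1 : v ⬝ᵥ ((Qᵀ * Q) *ᵥ v) = μ * ∑ y, (v y) ^ 2 := by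
      rw [hev]
      simp [dotProduct, Finset.mul_sum, Pi.smul_apply, smul_eq_mul]
      exact Finset.sum_congr rfl fun y _ => by ring
    have h2 : v ⬝ᵥ ((Qᵀ * Q) *ᵥ v) = ∑ x, ((Q *ᵥ v) x) ^ 2 := by
      rw [← Matrix.mulVec_mulVec, Matrix.dotProduct_mulVec, Matrix.vecMul_transpose]
      simp [dotProduct, sq]
    rw [← h1, h2]
  have hμle : μ ≤ 1 := by
    have h3 : μ * ∑ y, (v y) ^ 2 ≤ ∑ y, (v y) ^ 2 := by rw [hdot]; exact key v
    nlinarith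
  have hμ0 : 0 ≤ μ := by
    have h4 : 0 ≤ μ * ∑ y, (v y) ^ 2 := by
      rw [hdot]; exact Finset.sum_nonneg fun x _ => sq_nonneg _
    nlinarith
  calc Real.sqrt μ ≤ Real.sqrt 1 := Real.sqrt_le_sqrt hμle
    _ = 1 := Real.sqrt_one
end

section
/- Let C_f ∈ ℝ^{d×d} be symmetric positive definite and C_{fg} ∈ ℝ^{d×d}. Then the minimum over matrices A ∈ ℝ^{d×d} satisfying A C_f A^T = I_d of (d − 2 tr(A C_{fg})) equals d − 2‖C_f^{−1/2} C_{fg}‖_*, where ‖·‖_* denotes the nuclear norm (sum of singular values). -/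
open Matrix

/-- The nuclear norm of a `d × d` real matrix: the sum of its singular
values, i.e. the square roots of the eigenvalues of `Mᵀ M`. -/
noncomputable def nuclearNorm {d : ℕ} (M : Matrix (Fin d) (Fin d) ℝ) : ℝ :=
  ∑ i : Fin d,
    Real.sqrt ((Matrix.isHermitian_conjTranspose_mul_self M).eigenvalues i)

lemma aux_trace_bound {d : ℕ} (M : Matrix (Fin d) (Fin d) ℝ) :
    (∀ Q : Matrix (Fin d) (Fin d) ℝ, Q * Qᵀ = 1 → (Q * M).trace ≤ nuclearNorm M) ∧
    ∃ Q : Matrix (Fin d) (Fin d) ℝ, Q * Qᵀ = 1 ∧ (Q * M).trace = nuclearNorm M := by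
  classical
  set hH := Matrix.isHermitian_conjTranspose_mul_self M with hHdef
  set lam := hH.eigenvalues with hlam
  have hlam_nonneg : ∀ i, 0 ≤ lam i := fun i =>
    (Matrix.posSemidef_conjTranspose_mul_self M).eigenvalues_nonneg i
  set V := (hH.eigenvectorUnitary : Matrix (Fin d) (Fin d) ℝ) with hVdef
  have hstarV : star V = Vᵀ := by
    simp [Matrix.star_eq_conjTranspose]
  have hVtV : Vᵀ * V = 1 := by
    rw [← hstarV]; exact Matrix.mem_unitaryGroup_iff'.mp hH.eigenvectorUnitary.2
  have hVVt : V * Vᵀ = 1 := by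
    rw [← hstarV]; exact Matrix.mem_unitaryGroup_iff.mp hH.eigenvectorUnitary.2
  set W := M * V with hWdef
  have hMH : Mᴴ = Mᵀ := by simp
  have hWW : Wᵀ * W = Matrix.diagonal lam := by
    have hspec : Vᵀ * (Mᴴ * M) * V = Matrix.diagonal (RCLike.ofReal ∘ lam) := by
      rw [← hstarV]; exact (Unitary.conjStarAlgAut_star_apply (S := ℝ) _ _).symm.trans
        (Matrix.IsHermitian.conjStarAlgAut_star_eigenvectorUnitary hH)
    have hdiag : Matrix.diagonal (RCLike.ofReal ∘ lam) = Matrix.diagonal lam := by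
      congr 1
    have hexp : Wᵀ * W = Vᵀ * (Mᴴ * M) * V := by
      rw [hWdef, Matrix.transpose_mul, hMH]; simp only [mul_assoc]
    rw [hexp, hspec, hdiag]
  have hcol : ∀ i j, (∑ k, W k i * W k j) = if i = j then lam i else 0 := by
    intro i j
    have := congrArg (fun X => X i j) hWW
    simpa [Matrix.mul_apply, Matrix.diagonal_apply, Matrix.transpose_apply] using this
  have htr : ∀ Q : Matrix (Fin d) (Fin d) ℝ,
      (Q * M).trace = ∑ i, ∑ k, (Qᵀ * V) k i * W k i := by
    intro Q
    have h2 : (Q * (M * V)) * Vᵀ = Q * M := by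
      rw [mul_assoc, mul_assoc, hVVt, mul_one]
    calc (Q * M).trace = ((Q * (M * V)) * Vᵀ).trace := by rw [h2]
      _ = (Vᵀ * (Q * (M * V))).trace := trace_mul_comm _ _
      _ = ((Qᵀ * V)ᵀ * W).trace := by
          rw [Matrix.transpose_mul, Matrix.transpose_transpose, hWdef, mul_assoc]
      _ = ∑ i, ∑ k, (Qᵀ * V) k i * W k i := by
          simp [Matrix.trace, Matrix.diag, Matrix.mul_apply, mul_comm]
  have hnuc : nuclearNorm M = ∑ i, Real.sqrt (lam i) := rfl
  constructor
  · intro Q hQ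
    set P := Qᵀ * V with hPdef
    have hPtP : Pᵀ * P = 1 := by
      rw [hPdef, Matrix.transpose_mul, Matrix.transpose_transpose]
      calc Vᵀ * Q * (Qᵀ * V) = Vᵀ * (Q * Qᵀ) * V := by simp only [mul_assoc]
        _ = 1 := by rw [hQ, mul_one, hVtV]
    have hPcol : ∀ i, (∑ k, P k i * P k i) = 1 := by
      intro i
      have := congrArg (fun X => X i i) hPtP
      simpa [Matrix.mul_apply, Matrix.transpose_apply] using this
    rw [htr Q, hnuc]
    apply Finset.sum_le_sum
    intro i _
    have hcs := Finset.sum_mul_sq_le_sq_mul_sq Finset.univ (fun k => P k i) (fun k => W k i)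
    have h1 : (∑ k, P k i ^ 2) = 1 := by simpa [sq] using hPcol i
    have h2 : (∑ k, W k i ^ 2) = lam i := by simpa [sq] using hcol i i
    rw [h1, h2, one_mul] at hcs
    calc (∑ k, P k i * W k i) ≤ |∑ k, P k i * W k i| := le_abs_self _
      _ = Real.sqrt ((∑ k, P k i * W k i) ^ 2) := (Real.sqrt_sq_eq_abs _).symm
      _ ≤ Real.sqrt (lam i) := Real.sqrt_le_sqrt hcs
  · -- existence
    set s : Set (Fin d) := {i | lam i ≠ 0} with hsdef
    set w : Fin d → EuclideanSpace ℝ (Fin d) :=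
      fun i => (WithLp.equiv 2 _).symm (fun k => W k i) with hwdef
    set v : Fin d → EuclideanSpace ℝ (Fin d) :=
      fun i => (Real.sqrt (lam i))⁻¹ • w i with hvdef
    have hinner : ∀ i j, (inner ℝ (w i) (w j) : ℝ) = if i = j then lam i else 0 := by
      intro i j
      rw [← hcol i j]
      simp [PiLp.inner_apply, RCLike.inner_apply, hwdef, WithLp.equiv_symm_apply, PiLp.toLp_apply, mul_comm]
    have horth : Orthonormal ℝ (s.restrict v) := by
      rw [orthonormal_iff_ite]
      rintro ⟨i, hi⟩ ⟨j, hj⟩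
      simp only [Set.restrict, Set.domRestrict_apply, hvdef]
      by_cases hij : i = j
      · subst hij
        have hlpos : 0 < lam i := lt_of_le_of_ne (hlam_nonneg i) (Ne.symm hi)
        have hs : Real.sqrt (lam i) * Real.sqrt (lam i) = lam i :=
          Real.mul_self_sqrt (hlam_nonneg i)
        have hspos : 0 < Real.sqrt (lam i) := Real.sqrt_pos.mpr hlpos
        rw [if_pos rfl, real_inner_smul_left, real_inner_smul_right, hinner i i,
          if_pos rfl, ← hs]
        field_simp; rw [Real.sqrt_sq hspos.le]
      · have hne : (⟨i, hi⟩ : s) ≠ ⟨j, hj⟩ := fun h => hij (congrArg Subtype.val h)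
        rw [if_neg hne, real_inner_smul_left, real_inner_smul_right, hinner i j,
          if_neg hij, mul_zero, mul_zero]
    have hcard : Module.finrank ℝ (EuclideanSpace ℝ (Fin d)) = Fintype.card (Fin d) :=
      finrank_euclideanSpace
    obtain ⟨b, hb⟩ := horth.exists_orthonormalBasis_extension_of_card_eq hcard
    set B : Matrix (Fin d) (Fin d) ℝ := Matrix.of fun k i => b i k with hBdef
    have hBtB : Bᵀ * B = 1 := by
      ext i j
      have hbo := (orthonormal_iff_ite.mp b.orthonormal) i j
      simp only [PiLp.inner_apply, RCLike.inner_apply, conj_trivial] at hbo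
      simpa [Matrix.mul_apply, Matrix.transpose_apply, hBdef, Matrix.one_apply, mul_comm] using hbo
    refine ⟨V * Bᵀ, ?_, ?_⟩
    · have ht : (V * Bᵀ)ᵀ = B * Vᵀ := by
        rw [Matrix.transpose_mul, Matrix.transpose_transpose]
      rw [ht]
      calc V * Bᵀ * (B * Vᵀ) = V * (Bᵀ * B) * Vᵀ := by simp only [mul_assoc]
        _ = 1 := by rw [hBtB, mul_one, hVVt]
    · rw [htr, hnuc]
      have hQtV : (V * Bᵀ)ᵀ * V = B := by
        rw [Matrix.transpose_mul, Matrix.transpose_transpose, mul_assoc, hVtV, mul_one]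
      rw [hQtV]
      apply Finset.sum_congr rfl
      intro i _
      by_cases hi : lam i = 0
      · have hWzero : ∀ k, W k i = 0 := by
          have hsum : (∑ k, W k i * W k i) = 0 := by rw [hcol i i]; simp [hi]
          intro k
          have hk : W k i * W k i = 0 :=
            (Finset.sum_eq_zero_iff_of_nonneg
              (fun k _ => mul_self_nonneg (W k i))).mp hsum k (Finset.mem_univ k)
          exact mul_self_eq_zero.mp hk
        simp [hWzero, hi]
      · have hbi : b i = v i := hb i hi
        have hlpos : 0 < lam i := lt_of_le_of_ne (hlam_nonneg i) (Ne.symm hi)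
        have hspos : 0 < Real.sqrt (lam i) := Real.sqrt_pos.mpr hlpos
        have hs : Real.sqrt (lam i) * Real.sqrt (lam i) = lam i :=
          Real.mul_self_sqrt (hlam_nonneg i)
        have hbk : ∀ k, B k i = (Real.sqrt (lam i))⁻¹ * W k i := by
          intro k
          show b i k = _
          rw [hbi, hvdef]
          simp [hwdef, WithLp.equiv_symm_apply, PiLp.toLp_apply]
        calc (∑ k, B k i * W k i)
            = (Real.sqrt (lam i))⁻¹ * ∑ k, W k i * W k i := by
              rw [Finset.mul_sum]
              exact Finset.sum_congr rfl fun k _ => by rw [hbk k]; ring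
          _ = (Real.sqrt (lam i))⁻¹ * lam i := by rw [hcol i i, if_pos rfl]
          _ = Real.sqrt (lam i) := by
              rw [← hs]; field_simp; rw [Real.sqrt_sq hspos.le]

/-- Let `C_f ∈ ℝ^{d×d}` be symmetric positive definite with
inverse symmetric square root `R = C_f^{-1/2}` (symmetric positive definite
with `R R C_f = I`), and let `C_{fg} ∈ ℝ^{d×d}`.  Then the minimum over
matrices `A` satisfying `A C_f Aᵀ = I_d` of `d − 2 tr(A C_{fg})` equals
`d − 2 ‖C_f^{-1/2} C_{fg}‖_*`, with `‖·‖_*` the nuclear norm. -/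
theorem min_over_whitening_eq_nuclear
    {d : ℕ} (Cf Cfg : Matrix (Fin d) (Fin d) ℝ)
    (hCf_sym : Cfᵀ = Cf) (hCf_pd : Cf.PosDef)
    (R : Matrix (Fin d) (Fin d) ℝ)
    (hR_sym : Rᵀ = R) (hR_pd : R.PosDef)
    (hR_sq : R * R * Cf = 1) :
    IsLeast
      {v : ℝ | ∃ A : Matrix (Fin d) (Fin d) ℝ,
        A * Cf * Aᵀ = 1 ∧ v = (d : ℝ) - 2 * (A * Cfg).trace}
      ((d : ℝ) - 2 * nuclearNorm (R * Cfg)) := by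
  obtain ⟨hub, Q, hQ, hQtr⟩ := aux_trace_bound (R * Cfg)
  have hRRCf : R * (R * Cf) = 1 := by rw [← mul_assoc]; exact hR_sq
  have hRCfR : R * Cf * R = 1 := mul_eq_one_comm.mp hRRCf
  have hCfRR : Cf * (R * R) = 1 := mul_eq_one_comm.mp hR_sq
  constructor
  · refine ⟨Q * R, ?_, ?_⟩
    · have ht : (Q * R)ᵀ = R * Qᵀ := by rw [Matrix.transpose_mul, hR_sym]
      rw [ht]
      calc Q * R * Cf * (R * Qᵀ) = Q * (R * Cf * R) * Qᵀ := by simp only [mul_assoc]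
        _ = 1 := by rw [hRCfR, mul_one, hQ]
    · rw [← hQtr, mul_assoc]
  · rintro x ⟨A, hA, rfl⟩
    have hAt : (A * (Cf * R))ᵀ = R * Cf * Aᵀ := by
      rw [Matrix.transpose_mul, Matrix.transpose_mul, hR_sym, hCf_sym]
    have hQA : (A * (Cf * R)) * (A * (Cf * R))ᵀ = 1 := by
      rw [hAt]
      calc A * (Cf * R) * (R * Cf * Aᵀ) = A * (Cf * (R * R) * Cf) * Aᵀ := by
            simp only [mul_assoc]
        _ = A * Cf * Aᵀ := by rw [hCfRR, one_mul]
        _ = 1 := hA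
    have hcollapse : (A * (Cf * R)) * (R * Cfg) = A * Cfg := by
      calc (A * (Cf * R)) * (R * Cfg) = A * (Cf * (R * R) * Cfg) := by
            simp only [mul_assoc]
        _ = A * Cfg := by rw [hCfRR, one_mul]
    have hle := hub _ hQA
    rw [hcollapse] at hle
    linarith
end
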